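/- The class ℒ(RDFAwtl) is not closed under reversal, (disjoint) product (concatenation), Kleene plus, Kleene star, or shuffle. Witnesses: L_c^R = { c·w : w ∈ {a,b}*, |w|_a ≥ |w|_b }, L_≥ = { w ∈ {a,b}* : |w|_a ≥ |w|_b }, and {c} are all accepted by DFAwtls, yet (L_c^R)^R = L_c = L_≥·{c} is not accepted by any RDFAwtl; (L_c^R)^+ and (L_c^R)^* are not accepted by any RDFAwtl; and L_= ⧢ L_{2=} = { w ∈ {a,b}* : |w|_a ≤ |w|_b ≤ 2·|w|_a } is not accepted by any RDFAwtl although L_= and L_{2=} are accepted by DFAwtls. -/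

import Mathlib

/-- A nondeterministic finite automaton with translucent letters (NFAwtl). -/
structure NFAwtl (Q α : Type) where
  τ : Q → Set α
  I : Set Q
  F : Set Q
  δ : Q → α → Set Q
  tr : ∀ q a, a ∈ τ q → δ q a = ∅

namespace NFAwtl

variable {Q α : Type}

/-- One computation step of an NFAwtl: delete the leftmost non-translucent letter
and change state (the head returns to the left end). -/
def Step (A : NFAwtl Q α) : Q × List α → Q × List α → Prop := fun c c' =>
  ∃ u a v, c.2 = u ++ a :: v ∧ (∀ x ∈ u, x ∈ A.τ c.1) ∧ a ∉ A.τ c.1 ∧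
    c'.1 ∈ A.δ c.1 a ∧ c'.2 = u ++ v

/-- Acceptance: from some initial state, reach a configuration whose remaining
letters are all translucent for a final state. -/
def Accepts (A : NFAwtl Q α) (w : List α) : Prop :=
  ∃ q₀ ∈ A.I, ∃ q w', Relation.ReflTransGen A.Step (q₀, w) (q, w') ∧
    (∀ x ∈ w', x ∈ A.τ q) ∧ q ∈ A.F

def lang (A : NFAwtl Q α) : Set (List α) := { w | A.Accepts w }

/-- A DFAwtl: single initial state and at most one transition per state/letter. -/
def Deterministic (A : NFAwtl Q α) : Prop :=
  (∃ q₀, A.I = {q₀}) ∧ ∀ q a, (A.δ q a).Subsingleton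

end NFAwtl

/-- A repetitive NFAwtl (RNFAwtl): on the end-of-tape marker it may accept
(states in `Facc`) or change state via `δend` and continue. -/
structure RNFAwtl (Q α : Type) where
  τ : Q → Set α
  I : Set Q
  δ : Q → α → Set Q
  δend : Q → Set Q
  Facc : Set Q
  tr : ∀ q a, a ∈ τ q → δ q a = ∅
  accEnd : ∀ q, q ∈ Facc → δend q = ∅

namespace RNFAwtl

variable {Q α : Type}

/-- One computation step of an RNFAwtl: either delete the leftmost
non-translucent letter, or, when all remaining letters are translucent,
change state via a `◁`-transition and continue. -/
def Step (A : RNFAwtl Q α) : Q × List α → Q × List α → Prop := fun c c' =>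
  (∃ u a v, c.2 = u ++ a :: v ∧ (∀ x ∈ u, x ∈ A.τ c.1) ∧ a ∉ A.τ c.1 ∧
    c'.1 ∈ A.δ c.1 a ∧ c'.2 = u ++ v)
  ∨ ((∀ x ∈ c.2, x ∈ A.τ c.1) ∧ c'.1 ∈ A.δend c.1 ∧ c'.2 = c.2)

def Accepts (A : RNFAwtl Q α) (w : List α) : Prop :=
  ∃ q₀ ∈ A.I, ∃ q w', Relation.ReflTransGen A.Step (q₀, w) (q, w') ∧
    (∀ x ∈ w', x ∈ A.τ q) ∧ q ∈ A.Facc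

def lang (A : RNFAwtl Q α) : Set (List α) := { w | A.Accepts w }

/-- An RDFAwtl: single initial state and deterministic transitions. -/
def Deterministic (A : RNFAwtl Q α) : Prop :=
  (∃ q₀, A.I = {q₀}) ∧ (∀ q a, (A.δ q a).Subsingleton) ∧ ∀ q, (A.δend q).Subsingleton

end RNFAwtl

/-- A non-returning repetitive NFAwtl (nr-NFAwtl): the head continues from the
position of the last deleted letter; on the end-of-tape marker it may change
state and return the head to the left end. -/
structure NrNFAwtl (Q α : Type) where
  τ : Q → Set α
  I : Set Q
  δ : Q → α → Set Q
  δend : Q → Set Q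
  Facc : Set Q
  tr : ∀ q a, a ∈ τ q → δ q a = ∅
  accEnd : ∀ q, q ∈ Facc → δend q = ∅

namespace NrNFAwtl

variable {Q α : Type}

/-- Configurations are `(x, q, w)`: `x` is the already-skipped prefix, the head
is on the first letter of `w`. -/
def Step (A : NrNFAwtl Q α) :
    List α × Q × List α → List α × Q × List α → Prop := fun c c' =>
  (∃ u a v, c.2.2 = u ++ a :: v ∧ (∀ x ∈ u, x ∈ A.τ c.2.1) ∧ a ∉ A.τ c.2.1 ∧
    c'.2.1 ∈ A.δ c.2.1 a ∧ c'.1 = c.1 ++ u ∧ c'.2.2 = v)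
  ∨ ((∀ x ∈ c.2.2, x ∈ A.τ c.2.1) ∧ c'.2.1 ∈ A.δend c.2.1 ∧ c'.1 = [] ∧
    c'.2.2 = c.1 ++ c.2.2)

def Accepts (A : NrNFAwtl Q α) (w : List α) : Prop :=
  ∃ q₀ ∈ A.I, ∃ x q w', Relation.ReflTransGen A.Step ([], q₀, w) (x, q, w') ∧
    (∀ y ∈ w', y ∈ A.τ q) ∧ q ∈ A.Facc

def lang (A : NrNFAwtl Q α) : Set (List α) := { w | A.Accepts w }

def Deterministic (A : NrNFAwtl Q α) : Prop :=
  (∃ q₀, A.I = {q₀}) ∧ (∀ q a, (A.δ q a).Subsingleton) ∧ ∀ q, (A.δend q).Subsingleton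

end NrNFAwtl

/-- A non-repetitive non-returning NFAwtl (nr-nr-NFAwtl): non-returning, and it
must halt as soon as all remaining letters to the right are translucent. -/
structure NrnrNFAwtl (Q α : Type) where
  τ : Q → Set α
  I : Set Q
  F : Set Q
  δ : Q → α → Set Q
  tr : ∀ q a, a ∈ τ q → δ q a = ∅

namespace NrnrNFAwtl

variable {Q α : Type}

def Step (A : NrnrNFAwtl Q α) :
    List α × Q × List α → List α × Q × List α → Prop := fun c c' =>
  ∃ u a v, c.2.2 = u ++ a :: v ∧ (∀ x ∈ u, x ∈ A.τ c.2.1) ∧ a ∉ A.τ c.2.1 ∧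
    c'.2.1 ∈ A.δ c.2.1 a ∧ c'.1 = c.1 ++ u ∧ c'.2.2 = v

def Accepts (A : NrnrNFAwtl Q α) (w : List α) : Prop :=
  ∃ q₀ ∈ A.I, ∃ x q w', Relation.ReflTransGen A.Step ([], q₀, w) (x, q, w') ∧
    (∀ y ∈ w', y ∈ A.τ q) ∧ q ∈ A.F

def lang (A : NrnrNFAwtl Q α) : Set (List α) := { w | A.Accepts w }

def Deterministic (A : NrnrNFAwtl Q α) : Prop :=
  (∃ q₀, A.I = {q₀}) ∧ ∀ q a, (A.δ q a).Subsingleton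

end NrnrNFAwtl

/-- Language classes. -/
def NFAwtlLangs (α : Type) [Fintype α] : Set (Set (List α)) :=
  { L | ∃ (Q : Type) (_ : Fintype Q) (A : NFAwtl Q α), A.lang = L }

def DFAwtlLangs (α : Type) [Fintype α] : Set (Set (List α)) :=
  { L | ∃ (Q : Type) (_ : Fintype Q) (A : NFAwtl Q α), A.Deterministic ∧ A.lang = L }

def RNFAwtlLangs (α : Type) [Fintype α] : Set (Set (List α)) :=
  { L | ∃ (Q : Type) (_ : Fintype Q) (A : RNFAwtl Q α), A.lang = L }

def RDFAwtlLangs (α : Type) [Fintype α] : Set (Set (List α)) :=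
  { L | ∃ (Q : Type) (_ : Fintype Q) (A : RNFAwtl Q α), A.Deterministic ∧ A.lang = L }

def NrNFAwtlLangs (α : Type) [Fintype α] : Set (Set (List α)) :=
  { L | ∃ (Q : Type) (_ : Fintype Q) (A : NrNFAwtl Q α), A.lang = L }

def NrDFAwtlLangs (α : Type) [Fintype α] : Set (Set (List α)) :=
  { L | ∃ (Q : Type) (_ : Fintype Q) (A : NrNFAwtl Q α), A.Deterministic ∧ A.lang = L }

def NrnrNFAwtlLangs (α : Type) [Fintype α] : Set (Set (List α)) :=
  { L | ∃ (Q : Type) (_ : Fintype Q) (A : NrnrNFAwtl Q α), A.lang = L }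

def NrnrDFAwtlLangs (α : Type) [Fintype α] : Set (Set (List α)) :=
  { L | ∃ (Q : Type) (_ : Fintype Q) (A : NrnrNFAwtl Q α), A.Deterministic ∧ A.lang = L }

/-- The three-letter alphabet {a, b, c}. -/
inductive Al : Type
  | a | b | c
deriving DecidableEq

instance : Fintype Al := ⟨{Al.a, Al.b, Al.c}, fun x => by cases x <;> simp⟩

/-- The two-letter alphabet {a, b}. -/
inductive AB : Type
  | a | b
deriving DecidableEq

instance : Fintype AB := ⟨{AB.a, AB.b}, fun x => by cases x <;> simp⟩

inductive Shuffles {α : Type} : List α → List α → List α → Prop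
  | nil : Shuffles [] [] []
  | left {x : α} {u v w : List α} : Shuffles u v w → Shuffles (x :: u) v (x :: w)
  | right {x : α} {u v w : List α} : Shuffles u v w → Shuffles u (x :: v) (x :: w)

def shuffleLang {α : Type} (L₁ L₂ : Set (List α)) : Set (List α) :=
  { w | ∃ u ∈ L₁, ∃ v ∈ L₂, Shuffles u v w }

/-- L_c^R = { c·w : w ∈ {a,b}*, |w|_a ≥ |w|_b }. -/
def LcR : Language Al :=
  { u | ∃ w : List Al, Al.c ∉ w ∧ w.count Al.b ≤ w.count Al.a ∧ u = Al.c :: w }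

/-- L_≥ = { w ∈ {a,b}* : |w|_a ≥ |w|_b }. -/
def Lge : Set (List Al) := { w | Al.c ∉ w ∧ w.count Al.b ≤ w.count Al.a }

def Leq : Set (List AB) := { w | w.count AB.a = w.count AB.b }

def L2eq : Set (List AB) := { w | 2 * w.count AB.a = w.count AB.b }

/-!
Membership is witnessed by DFAwtls whose states record what is still owed, skipping the letters
that cannot settle the debt.

For non-membership let `A` be an RDFAwtl. On a word `aⁱ bᵏ`, or `c^f aⁱ bᵏ c Z`, with `i` and `k`
large, the letter `A` deletes next depends only on its state and on which blocks are still
nonempty, so all these words are processed by a single symbolic run on the (finitely many) states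
of `A`. This run never halts: a halt would give the same verdict on long words inside and outside
the language. By pigeonhole it visits a state twice, at times `u < v`, having deleted `α` more
`a`s and `β` more `b`s in between; then `aⁱ⁺ᵅ bᵏ⁺ᵝ` reaches at time `v` the configuration that
`aⁱ bᵏ` reaches at time `u`. Membership is therefore invariant under `(i, k) ↦ (i + α, k + β)`,
which forces `α = β = 0`, and then the run loops forever on a word of the language. For the words
with an inner `c` one first shows that no `b` is ever deleted and the inner `c` is never reached:
at such a moment two words that differ by moving one letter across the inner `c` reach the same
configuration, although only one of them is in the language.
-/

open Relation

theorem List.append_cons_inj_of_forall_of_not {γ : Type*} {P : γ → Prop}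
    {u u' v v' : List γ} {x x' : γ} (hu : ∀ y ∈ u, P y) (hx : ¬ P x)
    (hu' : ∀ y ∈ u', P y) (hx' : ¬ P x') :
    u ++ x :: v = u' ++ x' :: v' ↔ u = u' ∧ x = x' ∧ v = v' := by
  constructor
  · simp only [List.append_eq_append_iff, List.cons_eq_append_iff, List.cons_eq_cons]
    rintro (⟨c, rfl, ⟨rfl, rfl, rfl⟩ | ⟨d, rfl, rfl⟩⟩ |
      ⟨c, rfl, ⟨rfl, rfl, rfl⟩ | ⟨d, rfl, rfl⟩⟩) <;> simp_all
  · rintro ⟨rfl, rfl, rfl⟩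
    rfl

theorem List.exists_append_cons_of_not_forall {γ : Type*} {P : γ → Prop} {w : List γ}
    (h : ¬ ∀ y ∈ w, P y) : ∃ u x v, w = u ++ x :: v ∧ (∀ y ∈ u, P y) ∧ ¬ P x := by
  induction w with
  | nil => simp at h
  | cons z w ih =>
    by_cases hz : P z
    · obtain ⟨u, x, v, rfl, hu, hx⟩ := ih (by simpa [hz] using h)
      exact ⟨z :: u, x, v, rfl, by simpa [hz] using hu, hx⟩
    · exact ⟨[], z, w, rfl, by simp, hz⟩

open Classical in
noncomputable def Set.pick {γ : Type*} (S : Set γ) : Option γ :=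
  if h : S.Nonempty then some h.some else none

theorem Set.mem_of_pick_eq_some {γ : Type*} {S : Set γ} {x : γ} (h : S.pick = some x) :
    x ∈ S := by
  unfold Set.pick at h
  split_ifs at h with hS
  exact Option.some_injective _ h ▸ hS.some_mem

theorem Set.pick_eq_none {γ : Type*} {S : Set γ} : S.pick = none ↔ S = ∅ := by
  unfold Set.pick
  split_ifs with hS
  · simp [hS.ne_empty]
  · simpa [Set.not_nonempty_iff_eq_empty] using hS

namespace RNFAwtl

variable {Q α : Type} {A : RNFAwtl Q α}

variable (A) in
def Accepting (c : Q × List α) : Prop := (∀ x ∈ c.2, x ∈ A.τ c.1) ∧ c.1 ∈ A.Facc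

variable (A) in
def AcceptsFrom (c : Q × List α) : Prop := ∃ d, ReflTransGen A.Step c d ∧ A.Accepting d

theorem accepts_iff {q₀ : Q} (h : A.I = {q₀}) {w : List α} :
    A.Accepts w ↔ A.AcceptsFrom (q₀, w) := by
  simp [Accepts, AcceptsFrom, Accepting, h]

theorem acceptsFrom_iff {c : Q × List α} :
    A.AcceptsFrom c ↔ A.Accepting c ∨ ∃ d, A.Step c d ∧ A.AcceptsFrom d := by
  refine ⟨fun ⟨d, hcd, hd⟩ => ?_, ?_⟩
  · rcases hcd.cases_head with rfl | ⟨e, hce, hed⟩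
    exacts [Or.inl hd, Or.inr ⟨e, hce, d, hed, hd⟩]
  · rintro (hc | ⟨d, hcd, e, hde, he⟩)
    exacts [⟨c, .refl, hc⟩, ⟨e, .head hcd hde, he⟩]

theorem step_append_cons_iff {q : Q} {u v : List α} {x : α} {d : Q × List α}
    (hu : ∀ y ∈ u, y ∈ A.τ q) (hx : x ∉ A.τ q) :
    A.Step (q, u ++ x :: v) d ↔ ∃ p ∈ A.δ q x, d = (p, u ++ v) := by
  constructor
  · rintro (⟨u', x', v', h, hu', hx', hp, hd⟩ | ⟨ht, -⟩)
    · obtain ⟨rfl, rfl, rfl⟩ := (List.append_cons_inj_of_forall_of_not hu hx hu' hx').1 h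
      exact ⟨d.1, hp, Prod.ext rfl hd⟩
    · exact absurd (ht x (by simp)) hx
  · rintro ⟨p, hp, rfl⟩
    exact Or.inl ⟨u, x, v, rfl, hu, hx, hp, rfl⟩

theorem step_iff_of_forall_mem_τ {q : Q} {w : List α} {d : Q × List α}
    (ht : ∀ y ∈ w, y ∈ A.τ q) : A.Step (q, w) d ↔ ∃ p ∈ A.δend q, d = (p, w) := by
  constructor
  · rintro (⟨u, x, v, h, -, hx, -⟩ | ⟨-, hp, hd⟩)
    · exact absurd (ht x (by simp [show w = _ from h])) hx
    · exact ⟨d.1, hp, Prod.ext rfl hd⟩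
  · rintro ⟨p, hp, rfl⟩
    exact Or.inr ⟨ht, hp, rfl⟩

theorem acceptsFrom_append_cons_iff {q : Q} {u v : List α} {x : α}
    (hu : ∀ y ∈ u, y ∈ A.τ q) (hx : x ∉ A.τ q) :
    A.AcceptsFrom (q, u ++ x :: v) ↔ ∃ p ∈ A.δ q x, A.AcceptsFrom (p, u ++ v) := by
  have hnacc : ¬ A.Accepting (q, u ++ x :: v) := fun h => hx (h.1 x (by simp))
  simp [acceptsFrom_iff (c := (q, _)), hnacc, step_append_cons_iff hu hx]

theorem acceptsFrom_iff_of_forall_mem_τ {q : Q} {w : List α} (ht : ∀ y ∈ w, y ∈ A.τ q) :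
    A.AcceptsFrom (q, w) ↔ q ∈ A.Facc ∨ ∃ p ∈ A.δend q, A.AcceptsFrom (p, w) := by
  have hacc : A.Accepting (q, w) ↔ q ∈ A.Facc := and_iff_right ht
  simp [acceptsFrom_iff (c := (q, w)), hacc, step_iff_of_forall_mem_τ ht]

theorem acceptsFrom_congr_of_append_eq {q : Q} {u₁ u₂ v₁ v₂ : List α} {x : α}
    (hu₁ : ∀ y ∈ u₁, y ∈ A.τ q) (hu₂ : ∀ y ∈ u₂, y ∈ A.τ q) (hx : x ∉ A.τ q)
    (h : u₁ ++ v₁ = u₂ ++ v₂) :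
    A.AcceptsFrom (q, u₁ ++ x :: v₁) ↔ A.AcceptsFrom (q, u₂ ++ x :: v₂) := by
  rw [acceptsFrom_append_cons_iff hu₁ hx, acceptsFrom_append_cons_iff hu₂ hx, h]

/-- Every step deletes a letter, so acceptance is the only solution of its one-step
unfolding. -/
theorem acceptsFrom_iff_of_invariant (hend : ∀ q, A.δend q = ∅) (P : Q → List α → Prop)
    (hfin : ∀ q w, (∀ y ∈ w, y ∈ A.τ q) → (P q w ↔ q ∈ A.Facc))
    (hdel : ∀ q u x v, (∀ y ∈ u, y ∈ A.τ q) → x ∉ A.τ q →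
      (P q (u ++ x :: v) ↔ ∃ p ∈ A.δ q x, P p (u ++ v)))
    (q : Q) (w : List α) : A.AcceptsFrom (q, w) ↔ P q w := by
  induction hn : w.length using Nat.strong_induction_on generalizing q w with
  | _ n ih =>
  by_cases ht : ∀ y ∈ w, y ∈ A.τ q
  · simp [acceptsFrom_iff_of_forall_mem_τ ht, hfin q w ht, hend]
  · obtain ⟨u, x, v, rfl, hu, hx⟩ := List.exists_append_cons_of_not_forall ht
    rw [acceptsFrom_append_cons_iff hu hx, hdel q u x v hu hx]
    refine exists_congr fun p => and_congr_right fun _ => ih _ ?_ p _ rfl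
    simp [← hn]

theorem Accepting.not_step {c d : Q × List α} (hc : A.Accepting c) : ¬ A.Step c d := by
  rintro (⟨u, x, v, h, -, hx, -⟩ | ⟨-, hp, -⟩)
  · exact hx (hc.1 x (by simp [h]))
  · simp [A.accEnd _ hc.2] at hp

theorem Deterministic.rightUnique (hdet : A.Deterministic) : Relator.RightUnique A.Step := by
  rintro ⟨q, w⟩ d e hd he
  rcases hd with ⟨u, x, v, hw, hu, hx, hp, hd⟩ | ⟨ht, hp, hd⟩
  · obtain rfl : w = u ++ x :: v := hw
    obtain ⟨p, hp', rfl⟩ := (step_append_cons_iff hu hx).1 he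
    exact Prod.ext (hdet.2.1 _ _ hp hp') hd
  · obtain ⟨p, hp', rfl⟩ := (step_iff_of_forall_mem_τ ht).1 he
    exact Prod.ext (hdet.2.2 _ hp hp') hd

theorem Deterministic.acceptsFrom_iff_of_reflTransGen (hdet : A.Deterministic)
    {c d : Q × List α} (hcd : ReflTransGen A.Step c d) : A.AcceptsFrom c ↔ A.AcceptsFrom d := by
  refine ⟨fun ⟨e, hce, he⟩ => ?_, fun ⟨e, hde, he⟩ => ⟨e, hcd.trans hde, he⟩⟩
  rcases hcd.total_of_right_unique hdet.rightUnique hce with hde | hed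
  · exact ⟨e, hde, he⟩
  · rcases hed.cases_head with rfl | ⟨f, hef, -⟩
    exacts [⟨e, .refl, he⟩, absurd hef he.not_step]

theorem Deterministic.not_acceptsFrom_of_transGen (hdet : A.Deterministic)
    {c : Q × List α} (hc : TransGen A.Step c c) : ¬ A.AcceptsFrom c := by
  rintro ⟨d, hcd, hd⟩
  have hback : ∀ e, ReflTransGen A.Step c e → TransGen A.Step e c := by
    intro e hce
    induction hce with
    | refl => exact hc
    | tail _ hef ih =>
      obtain ⟨g, heg, hgc⟩ := TransGen.head'_iff.1 ih
      rw [hdet.rightUnique hef heg]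
      exact (reflTransGen_iff_eq_or_transGen.1 hgc).elim (· ▸ hc) id
  obtain ⟨g, hdg, -⟩ := TransGen.head'_iff.1 (hback d hcd)
  exact hd.not_step hdg

end RNFAwtl

namespace NFAwtl

variable {Q α : Type}

def toRNFAwtl (A : NFAwtl Q α) : RNFAwtl Q α where
  τ := A.τ
  I := A.I
  δ := A.δ
  δend _ := ∅
  Facc := A.F
  tr := A.tr
  accEnd _ _ := rfl

theorem accepts_toRNFAwtl {A : NFAwtl Q α} {w : List α} :
    A.toRNFAwtl.Accepts w ↔ A.Accepts w := by
  have hstep : A.toRNFAwtl.Step = A.Step := by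
    ext c d
    simp [RNFAwtl.Step, NFAwtl.Step, toRNFAwtl]
  simp only [RNFAwtl.Accepts, NFAwtl.Accepts, hstep]
  rfl

theorem mem_DFAwtlLangs_of_acceptsFrom_iff [Fintype α] [Fintype Q] (A : NFAwtl Q α)
    (hδ : ∀ q x, (A.δ q x).Subsingleton) {q₀ : Q} (hI : A.I = {q₀}) {L : Set (List α)}
    (hL : ∀ w, A.toRNFAwtl.AcceptsFrom (q₀, w) ↔ w ∈ L) : L ∈ DFAwtlLangs α :=
  ⟨Q, inferInstance, A, ⟨⟨q₀, hI⟩, hδ⟩, Set.ext fun w => by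
    rw [← hL, ← RNFAwtl.accepts_iff hI]
    exact accepts_toRNFAwtl.symm⟩

end NFAwtl

section Machines

open NFAwtl RNFAwtl

def lcMachine (q₀ : Option Bool) : NFAwtl (Option Bool) Al where
  τ := fun
    | none => ∅
    | some false => {Al.a}
    | some true => {Al.b}
  I := {q₀}
  F := {some false}
  δ := fun
    | none, Al.c => {some false}
    | some false, Al.b => {some true}
    | some true, Al.a => {some false}
    | _, _ => ∅
  tr := by rintro (_ | _ | _) (_ | _ | _) h <;> simp_all

def lcLang : Option Bool → List Al → Prop
  | none, w => ∃ v, Al.c ∉ v ∧ v.count Al.b ≤ v.count Al.a ∧ w = Al.c :: v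
  | some false, w => w ∈ Lge
  | some true, w => Al.c ∉ w ∧ w.count Al.b < w.count Al.a

theorem lcMachine_acceptsFrom_iff (q₀ q : Option Bool) (w : List Al) :
    (lcMachine q₀).toRNFAwtl.AcceptsFrom (q, w) ↔ lcLang q w := by
  refine acceptsFrom_iff_of_invariant (fun _ => rfl) _ ?_ ?_ q w
  · rintro (_ | _ | _) w hw <;> simp only [toRNFAwtl, lcMachine, Set.mem_empty_iff_false,
      Set.mem_singleton_iff] at hw ⊢
    all_goals
      first | rw [List.eq_nil_iff_forall_not_mem.2 hw] | rw [List.eq_replicate_of_mem hw]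
      simp [lcLang, Lge, List.count_replicate]
  · rintro (_ | _ | _) u (_ | _ | _) v hu hx <;> simp only [toRNFAwtl, lcMachine,
      Set.mem_empty_iff_false, Set.mem_singleton_iff, not_true_eq_false] at hu hx ⊢
    all_goals
      first | rw [List.eq_nil_iff_forall_not_mem.2 hu] | rw [List.eq_replicate_of_mem hu]
      simp [lcLang, Lge, List.count_replicate]

theorem lcMachine_δ_subsingleton (q₀ q : Option Bool) (x : Al) :
    ((lcMachine q₀).δ q x).Subsingleton := by
  rcases q with _ | _ | _ <;> cases x <;> simp [lcMachine]

theorem LcR_mem_DFAwtlLangs : (LcR : Set (List Al)) ∈ DFAwtlLangs Al :=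
  (lcMachine none).mem_DFAwtlLangs_of_acceptsFrom_iff (lcMachine_δ_subsingleton none) rfl
    fun w => lcMachine_acceptsFrom_iff none none w

theorem Lge_mem_DFAwtlLangs : Lge ∈ DFAwtlLangs Al :=
  (lcMachine (some false)).mem_DFAwtlLangs_of_acceptsFrom_iff (lcMachine_δ_subsingleton _) rfl
    fun w => lcMachine_acceptsFrom_iff _ (some false) w

def cMachine : NFAwtl Bool Al where
  τ _ := ∅
  I := {false}
  F := {true}
  δ := fun
    | false, Al.c => {true}
    | _, _ => ∅
  tr _ _ h := h.elim

def cLang : Bool → List Al → Prop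
  | false, w => w = [Al.c]
  | true, w => w = []

theorem cMachine_acceptsFrom_iff (q : Bool) (w : List Al) :
    cMachine.toRNFAwtl.AcceptsFrom (q, w) ↔ cLang q w := by
  refine acceptsFrom_iff_of_invariant (fun _ => rfl) _ ?_ ?_ q w
  · rintro (_ | _) w hw <;>
      simp [toRNFAwtl, cMachine, cLang, List.eq_nil_iff_forall_not_mem.2 hw]
  · rintro (_ | _) u (_ | _ | _) v hu - <;>
      simp [toRNFAwtl, cMachine, cLang, List.eq_nil_iff_forall_not_mem.2 hu]

theorem singleton_c_mem_DFAwtlLangs : ({[Al.c]} : Set (List Al)) ∈ DFAwtlLangs Al :=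
  cMachine.mem_DFAwtlLangs_of_acceptsFrom_iff
    (by rintro (_ | _) (_ | _ | _) <;> simp [cMachine]) rfl
    fun w => cMachine_acceptsFrom_iff false w

/-- The state records the letter still owed: `some false` owes a `b`, `some true` an `a`. -/
def eqMachine : NFAwtl (Option Bool) AB where
  τ := fun
    | none => ∅
    | some false => {AB.a}
    | some true => {AB.b}
  I := {none}
  F := {none}
  δ := fun
    | none, AB.a => {some false}
    | none, AB.b => {some true}
    | some false, AB.b => {none}
    | some true, AB.a => {none}
    | _, _ => ∅
  tr := by rintro (_ | _ | _) (_ | _) h <;> simp_all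

def eqLang : Option Bool → List AB → Prop
  | none, w => w.count AB.a = w.count AB.b
  | some false, w => w.count AB.b = w.count AB.a + 1
  | some true, w => w.count AB.a = w.count AB.b + 1

theorem eqMachine_acceptsFrom_iff (q : Option Bool) (w : List AB) :
    eqMachine.toRNFAwtl.AcceptsFrom (q, w) ↔ eqLang q w := by
  refine acceptsFrom_iff_of_invariant (fun _ => rfl) _ ?_ ?_ q w
  · rintro (_ | _ | _) w hw <;> simp only [toRNFAwtl, eqMachine, Set.mem_empty_iff_false,
      Set.mem_singleton_iff] at hw ⊢
    all_goals
      first | rw [List.eq_nil_iff_forall_not_mem.2 hw] | rw [List.eq_replicate_of_mem hw]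
      simp [eqLang, List.count_replicate]
  · rintro (_ | _ | _) u (_ | _) v hu hx <;> simp only [toRNFAwtl, eqMachine,
      Set.mem_empty_iff_false, Set.mem_singleton_iff, not_true_eq_false] at hu hx ⊢
    all_goals
      first | rw [List.eq_nil_iff_forall_not_mem.2 hu] | rw [List.eq_replicate_of_mem hu]
      simp [eqLang, List.count_replicate]
      try omega

theorem Leq_mem_DFAwtlLangs : Leq ∈ DFAwtlLangs AB :=
  eqMachine.mem_DFAwtlLangs_of_acceptsFrom_iff
    (by rintro (_ | _ | _) (_ | _) <;> simp [eqMachine]) rfl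
    fun w => eqMachine_acceptsFrom_iff none w

inductive TwoEqState
  | balanced | owesTwoB | owesB | owesHalfA
  deriving DecidableEq

open TwoEqState in
instance : Fintype TwoEqState :=
  ⟨{balanced, owesTwoB, owesB, owesHalfA}, fun x => by cases x <;> simp⟩

open TwoEqState in
def twoEqMachine : NFAwtl TwoEqState AB where
  τ := fun
    | balanced => ∅
    | owesTwoB => {AB.a}
    | owesB => {AB.a}
    | owesHalfA => {AB.b}
  I := {balanced}
  F := {balanced}
  δ := fun
    | balanced, AB.a => {owesTwoB}
    | balanced, AB.b => {owesHalfA}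
    | owesTwoB, AB.b => {owesB}
    | owesB, AB.b => {balanced}
    | owesHalfA, AB.a => {owesB}
    | _, _ => ∅
  tr := by rintro (_ | _ | _ | _) (_ | _) h <;> simp_all

open TwoEqState in
def twoEqLang : TwoEqState → List AB → Prop
  | balanced, w => 2 * w.count AB.a = w.count AB.b
  | owesTwoB, w => 2 * w.count AB.a + 2 = w.count AB.b
  | owesB, w => 2 * w.count AB.a + 1 = w.count AB.b
  | owesHalfA, w => 2 * w.count AB.a = w.count AB.b + 1

theorem twoEqMachine_acceptsFrom_iff (q : TwoEqState) (w : List AB) :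
    twoEqMachine.toRNFAwtl.AcceptsFrom (q, w) ↔ twoEqLang q w := by
  refine acceptsFrom_iff_of_invariant (fun _ => rfl) _ ?_ ?_ q w
  · rintro (_ | _ | _ | _) w hw <;> simp only [toRNFAwtl, twoEqMachine,
      Set.mem_empty_iff_false, Set.mem_singleton_iff] at hw ⊢
    all_goals
      first | rw [List.eq_nil_iff_forall_not_mem.2 hw] | rw [List.eq_replicate_of_mem hw]
      simp [twoEqLang, List.count_replicate]
  · rintro (_ | _ | _ | _) u (_ | _) v hu hx <;> simp only [toRNFAwtl, twoEqMachine,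
      Set.mem_empty_iff_false, Set.mem_singleton_iff, not_true_eq_false] at hu hx ⊢
    all_goals
      first | rw [List.eq_nil_iff_forall_not_mem.2 hu] | rw [List.eq_replicate_of_mem hu]
      simp [twoEqLang, List.count_replicate]
      try omega

theorem L2eq_mem_DFAwtlLangs : L2eq ∈ DFAwtlLangs AB :=
  twoEqMachine.mem_DFAwtlLangs_of_acceptsFrom_iff
    (by rintro (_ | _ | _ | _) (_ | _) <;> simp [twoEqMachine]) rfl
    fun w => twoEqMachine_acceptsFrom_iff .balanced w

end Machines

namespace SymbolicRun

variable {S E : Type*} (next : S → Option (E × S)) (s₀ : S)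

/-- Once `next` is undefined the run stays where it is. -/
def state : ℕ → S
  | 0 => s₀
  | t + 1 => ((next (state t)).map Prod.snd).getD (state t)

def event (t : ℕ) : Option E := (next (state next s₀ t)).map Prod.fst

def count [DecidableEq E] (e : E) (t : ℕ) : ℕ :=
  Nat.count (fun n => event next s₀ n = some e) t

variable {next s₀}

@[simp] theorem state_zero : state next s₀ 0 = s₀ := rfl

@[simp] theorem count_zero [DecidableEq E] (e : E) : count next s₀ e 0 = 0 := Nat.count_zero _

theorem state_succ {t : ℕ} {e : E} {s : S} (h : next (state next s₀ t) = some (e, s)) :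
    state next s₀ (t + 1) = s := by
  simp [state, h]

theorem count_succ [DecidableEq E] {t : ℕ} {e : E} {s : S}
    (h : next (state next s₀ t) = some (e, s)) (e' : E) :
    count next s₀ e' (t + 1) = count next s₀ e' t + if e = e' then 1 else 0 := by
  have he : event next s₀ t = some e := by simp [event, h]
  unfold count
  simp [Nat.count_succ, he]

theorem count_le [DecidableEq E] (e : E) (t : ℕ) : count next s₀ e t ≤ t := Nat.count_le _

theorem count_mono [DecidableEq E] (e : E) : Monotone (count next s₀ e) := Nat.count_monotone _

theorem exists_lt_state_eq [Finite S] : ∃ u v, u < v ∧ state next s₀ u = state next s₀ v :=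
  Set.finite_univ.exists_lt_map_eq_of_forall_mem fun _ => Set.mem_univ _

end SymbolicRun

namespace RNFAwtl

open SymbolicRun

variable {Q α : Type} {S E : Type*} [DecidableEq E] {A : RNFAwtl Q α}

variable (A) in
/-- `cfg s i k` is the configuration of `A` that the symbolic state `s` stands for when `i` letters
of the first kind and `k` of the second are left; the moves `ea` and `eb` delete one of them. -/
def Simulates (next : S → Option (E × S)) (ea eb : E) (cfg : S → ℕ → ℕ → Q × List α) : Prop :=
  ∀ ⦃s e s'⦄, next s = some (e, s') → ∀ i k,
    A.Step (cfg s (i + if e = ea then 1 else 0) (k + if e = eb then 1 else 0)) (cfg s' i k)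

section Simulates

variable {next : S → Option (E × S)} {s₀ : S} {ea eb : E} {cfg : S → ℕ → ℕ → Q × List α}

theorem Simulates.step (hsim : A.Simulates next ea eb cfg) {t i k : ℕ}
    (ht : (next (state next s₀ t)).isSome) (hi : count next s₀ ea (t + 1) ≤ i)
    (hk : count next s₀ eb (t + 1) ≤ k) :
    A.Step (cfg (state next s₀ t) (i - count next s₀ ea t) (k - count next s₀ eb t))
      (cfg (state next s₀ (t + 1)) (i - count next s₀ ea (t + 1))
        (k - count next s₀ eb (t + 1))) := by
  obtain ⟨⟨e, s⟩, h⟩ := Option.isSome_iff_exists.1 ht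
  rw [count_succ h ea] at hi ⊢
  rw [count_succ h eb] at hk ⊢
  rw [state_succ h]
  convert hsim h (i - (count next s₀ ea t + if e = ea then 1 else 0))
    (k - (count next s₀ eb t + if e = eb then 1 else 0)) using 2 <;> split_ifs at * <;> omega

theorem Simulates.reflTransGen (hsim : A.Simulates next ea eb cfg) {t₁ t₂ i k : ℕ}
    (h₁₂ : t₁ ≤ t₂) (hdef : ∀ t < t₂, (next (state next s₀ t)).isSome)
    (hi : count next s₀ ea t₂ ≤ i) (hk : count next s₀ eb t₂ ≤ k) :
    ReflTransGen A.Step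
      (cfg (state next s₀ t₁) (i - count next s₀ ea t₁) (k - count next s₀ eb t₁))
      (cfg (state next s₀ t₂) (i - count next s₀ ea t₂) (k - count next s₀ eb t₂)) := by
  induction t₂, h₁₂ using Nat.le_induction with
  | base => rfl
  | succ t _ ih =>
    exact (ih (fun t' ht' => hdef t' (by omega)) ((count_mono ea t.le_succ).trans hi)
      ((count_mono eb t.le_succ).trans hk)).tail (hsim.step (hdef t t.lt_succ_self) hi hk)

theorem Simulates.reflTransGen_of_start (hsim : A.Simulates next ea eb cfg) {t i k : ℕ}
    (hdef : ∀ t' < t, (next (state next s₀ t')).isSome)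
    (hi : count next s₀ ea t ≤ i) (hk : count next s₀ eb t ≤ k) :
    ReflTransGen A.Step (cfg s₀ i k)
      (cfg (state next s₀ t) (i - count next s₀ ea t) (k - count next s₀ eb t)) := by
  simpa using hsim.reflTransGen (Nat.zero_le t) hdef hi hk

/-- A halt at time `t` where acceptance does not depend on the counters would give the same
verdict on all words with counters above `t`. -/
theorem Simulates.isSome_next (hsim : A.Simulates next ea eb cfg) (hdet : A.Deterministic)
    (hsep : ∀ N, ∃ i k i' k', N ≤ i ∧ N ≤ k ∧ N ≤ i' ∧ N ≤ k' ∧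
      A.AcceptsFrom (cfg s₀ i k) ∧ ¬ A.AcceptsFrom (cfg s₀ i' k'))
    (hhalt : ∀ t, (∀ t' < t, (next (state next s₀ t')).isSome) →
      next (state next s₀ t) = none →
      ∃ P : Prop, ∀ i k, A.AcceptsFrom (cfg (state next s₀ t) (i + 1) (k + 1)) ↔ P) :
    ∀ t, (next (state next s₀ t)).isSome := by
  intro t
  induction t using Nat.strong_induction_on with
  | _ t ih =>
  rw [Option.isSome_iff_ne_none]
  intro hnone
  obtain ⟨P, hP⟩ := hhalt t ih hnone
  have hle := count_le (next := next) (s₀ := s₀)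
  have key : ∀ i k, t + 1 ≤ i → t + 1 ≤ k → (A.AcceptsFrom (cfg s₀ i k) ↔ P) := by
    intro i k hi hk
    rw [hdet.acceptsFrom_iff_of_reflTransGen (hsim.reflTransGen_of_start ih
      ((hle ea t).trans (by omega)) ((hle eb t).trans (by omega))),
      ← hP (i - count next s₀ ea t - 1) (k - count next s₀ eb t - 1)]
    have := hle ea t
    have := hle eb t
    rw [Nat.sub_add_cancel (by omega), Nat.sub_add_cancel (by omega)]
  obtain ⟨i, k, i', k', hi, hk, hi', hk', hacc, hrej⟩ := hsep (t + 1)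
  exact hrej ((key i' k' hi' hk').2 ((key i k hi hk).1 hacc))

theorem Simulates.acceptsFrom_pump (hsim : A.Simulates next ea eb cfg) (hdet : A.Deterministic)
    (hdef : ∀ t, (next (state next s₀ t)).isSome) {u v i k : ℕ} (huv : u ≤ v)
    (hs : state next s₀ u = state next s₀ v) (hi : v ≤ i) (hk : v ≤ k) :
    A.AcceptsFrom (cfg s₀ (i + (count next s₀ ea v - count next s₀ ea u))
      (k + (count next s₀ eb v - count next s₀ eb u))) ↔ A.AcceptsFrom (cfg s₀ i k) := by
  have hle := count_le (next := next) (s₀ := s₀)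
  have hA := count_mono (next := next) (s₀ := s₀) ea huv
  have hB := count_mono (next := next) (s₀ := s₀) eb huv
  have := hle ea v
  have := hle eb v
  rw [hdet.acceptsFrom_iff_of_reflTransGen (hsim.reflTransGen_of_start (t := v)
      (fun t _ => hdef t) (by omega) (by omega)),
    hdet.acceptsFrom_iff_of_reflTransGen (hsim.reflTransGen_of_start (t := u)
      (fun t _ => hdef t) (by omega) (by omega)), ← hs]
  rw [show i + (count next s₀ ea v - count next s₀ ea u) - count next s₀ ea v =
      i - count next s₀ ea u by omega,
    show k + (count next s₀ eb v - count next s₀ eb u) - count next s₀ eb v =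
      k - count next s₀ eb u by omega]

theorem Simulates.not_acceptsFrom_of_cycle (hsim : A.Simulates next ea eb cfg)
    (hdet : A.Deterministic) (hdef : ∀ t, (next (state next s₀ t)).isSome) {u v i k : ℕ}
    (huv : u < v) (hs : state next s₀ u = state next s₀ v)
    (hA : count next s₀ ea u = count next s₀ ea v) (hB : count next s₀ eb u = count next s₀ eb v)
    (hi : v ≤ i) (hk : v ≤ k) : ¬ A.AcceptsFrom (cfg s₀ i k) := by
  have hle := count_le (next := next) (s₀ := s₀)
  have := hle ea v
  have := hle eb v
  rw [hdet.acceptsFrom_iff_of_reflTransGen (hsim.reflTransGen_of_start (t := u)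
    (fun t _ => hdef t) (by omega) (by omega))]
  have hcyc := TransGen.head'
    (hsim.step (i := i) (k := k) (hdef u) ((count_mono ea huv).trans (by omega))
      ((count_mono eb huv).trans (by omega)))
    (hsim.reflTransGen (i := i) (k := k) huv (fun t _ => hdef t) (by omega) (by omega))
  rw [← hs, ← hA, ← hB] at hcyc
  exact hdet.not_acceptsFrom_of_transGen hcyc

end Simulates

end RNFAwtl

theorem Nat.eq_zero_of_band_shift_invariant {N α β : ℕ}
    (h : ∀ i k, N ≤ i → N ≤ k →
      (i + α ≤ k + β ∧ k + β ≤ 2 * (i + α) ↔ i ≤ k ∧ k ≤ 2 * i)) : α = 0 ∧ β = 0 := by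
  have := h N N le_rfl le_rfl
  have := h N (2 * N) le_rfl (by omega)
  have := h N (2 * N + 1) le_rfl (by omega)
  have := h (N + 1) N (by omega) le_rfl
  omega

namespace RNFAwtl

open SymbolicRun

variable {Q : Type} (A : RNFAwtl Q AB)

open Classical in
/-- Symbolic run on `aⁱ bᵏ` with `i, k > 0`, where the leftmost opaque letter is determined by
`τ q` alone. A move is the deleted letter, or `none` for a `◁`-transition. -/
noncomputable def abNext (q : Q) : Option (Option AB × Q) :=
  if AB.a ∉ A.τ q then (A.δ q AB.a).pick.map (some AB.a, ·)
  else if AB.b ∉ A.τ q then (A.δ q AB.b).pick.map (some AB.b, ·)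
  else if q ∈ A.Facc then none
  else (A.δend q).pick.map (none, ·)

def abCfg (q : Q) (i k : ℕ) : Q × List AB := (q, List.replicate i AB.a ++ List.replicate k AB.b)

theorem simulates_abNext : A.Simulates A.abNext (some AB.a) (some AB.b) abCfg := by
  intro q e q' h i k
  unfold abNext at h
  split_ifs at h with ha hb hf <;> obtain ⟨p, hp, ⟨⟩⟩ := Option.map_eq_some_iff.1 h <;>
    have hp := Set.mem_of_pick_eq_some hp
  · exact Or.inr ⟨fun x _ => by cases x <;> assumption, hp, by simp [abCfg]⟩
  · refine Or.inl ⟨List.replicate i AB.a, AB.b, List.replicate k AB.b, ?_,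
      fun y hy => List.eq_of_mem_replicate hy ▸ ha, hb, hp, ?_⟩ <;>
      simp [abCfg, List.replicate_succ]
  · refine Or.inl ⟨[], AB.a, List.replicate i AB.a ++ List.replicate k AB.b, ?_, by simp, ha, hp,
      ?_⟩ <;> simp [abCfg, List.replicate_succ]

theorem acceptsFrom_abCfg_iff_of_abNext_eq_none {q : Q} (h : A.abNext q = none) (i k : ℕ) :
    A.AcceptsFrom (abCfg q (i + 1) (k + 1)) ↔ AB.a ∈ A.τ q ∧ AB.b ∈ A.τ q ∧ q ∈ A.Facc := by
  unfold abNext at h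
  rw [abCfg]
  split_ifs at h with ha hb hf <;> simp only [Option.map_eq_none_iff, Set.pick_eq_none] at h
  · rw [acceptsFrom_iff_of_forall_mem_τ fun x _ => by cases x <;> assumption]
    simp_all
  · rw [acceptsFrom_iff_of_forall_mem_τ fun x _ => by cases x <;> assumption]
    simp_all
  · rw [List.replicate_succ (n := k),
      acceptsFrom_append_cons_iff (fun y hy => List.eq_of_mem_replicate hy ▸ ha) hb]
    simp [h, hb]
  · rw [List.replicate_succ, List.cons_append]
    refine (acceptsFrom_append_cons_iff (u := []) (by simp) ha).trans ?_
    simp [h, ha]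

end RNFAwtl

open RNFAwtl SymbolicRun in
theorem notMem_RDFAwtlLangs_of_replicate {L : Set (List AB)}
    (hL : ∀ i k, List.replicate i AB.a ++ List.replicate k AB.b ∈ L ↔ i ≤ k ∧ k ≤ 2 * i) :
    L ∉ RDFAwtlLangs AB := by
  rintro ⟨Q, _, A, hdet, rfl⟩
  obtain ⟨q₀, hI⟩ := hdet.1
  have hmem (i k : ℕ) : A.AcceptsFrom (abCfg q₀ i k) ↔ i ≤ k ∧ k ≤ 2 * i := by
    rw [← hL, abCfg, ← accepts_iff hI]
    rfl
  have hsim := simulates_abNext A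
  have hdef := hsim.isSome_next (s₀ := q₀) hdet
    (fun N => ⟨N, N, N, 2 * N + 1, le_rfl, le_rfl, le_rfl, by omega, (hmem N N).2 (by omega),
      by simp [hmem]⟩)
    (fun t _ h => ⟨_, acceptsFrom_abCfg_iff_of_abNext_eq_none A h⟩)
  obtain ⟨u, v, huv, hs⟩ := exists_lt_state_eq (next := A.abNext) (s₀ := q₀)
  obtain ⟨hα, hβ⟩ := Nat.eq_zero_of_band_shift_invariant fun i k hi hk => by
    simpa only [hmem] using hsim.acceptsFrom_pump hdet hdef huv.le hs hi hk
  have := count_mono (next := A.abNext) (s₀ := q₀) (some AB.a) huv.le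
  have := count_mono (next := A.abNext) (s₀ := q₀) (some AB.b) huv.le
  exact hsim.not_acceptsFrom_of_cycle hdet hdef huv hs (by omega) (by omega) le_rfl le_rfl
    ((hmem v v).2 ⟨le_rfl, by omega⟩)

theorem Shuffles.count_eq {γ : Type} [BEq γ] {x : γ} {u v w : List γ} (h : Shuffles u v w) :
    w.count x = u.count x + v.count x := by
  induction h with
  | nil => rfl
  | left _ ih | right _ ih => simp only [List.count_cons, ih]; omega

theorem exists_shuffles_of_count (w : List AB) {p q r s : ℕ} (ha : w.count AB.a = p + r)
    (hb : w.count AB.b = q + s) : ∃ u v, Shuffles u v w ∧ u.count AB.a = p ∧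
      u.count AB.b = q ∧ v.count AB.a = r ∧ v.count AB.b = s := by
  induction w generalizing p q r s with
  | nil =>
    simp only [List.count_nil] at ha hb
    exact ⟨[], [], .nil, by simp only [List.count_nil]; omega⟩
  | cons x w ih =>
    cases x <;> simp only [List.count_cons, beq_iff_eq, reduceCtorEq, ite_true, ite_false,
      add_zero] at ha hb
    · rcases p with _ | p
      · obtain ⟨u, v, h, hu⟩ := ih (p := 0) (r := r - 1) (by omega) hb
        exact ⟨u, AB.a :: v, .right h, by simp; omega⟩
      · obtain ⟨u, v, h, hu⟩ := ih (p := p) (r := r) (by omega) hb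
        exact ⟨AB.a :: u, v, .left h, by simp; omega⟩
    · rcases q with _ | q
      · obtain ⟨u, v, h, hu⟩ := ih (q := 0) (s := s - 1) ha (by omega)
        exact ⟨u, AB.b :: v, .right h, by simp; omega⟩
      · obtain ⟨u, v, h, hu⟩ := ih (q := q) (s := s) ha (by omega)
        exact ⟨AB.b :: u, v, .left h, by simp; omega⟩

theorem shuffleLang_Leq_L2eq : shuffleLang Leq L2eq =
    { w | w.count AB.a ≤ w.count AB.b ∧ w.count AB.b ≤ 2 * w.count AB.a } := by
  ext w
  constructor
  · rintro ⟨u, hu, v, hv, h⟩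
    have := h.count_eq (x := AB.a)
    have := h.count_eq (x := AB.b)
    simp only [Leq, L2eq, Set.mem_ofPred_eq] at hu hv ⊢
    omega
  · rintro ⟨h₁, h₂⟩
    obtain ⟨u, v, h, hu⟩ := exists_shuffles_of_count w
      (p := 2 * w.count AB.a - w.count AB.b) (q := 2 * w.count AB.a - w.count AB.b)
      (r := w.count AB.b - w.count AB.a) (s := 2 * (w.count AB.b - w.count AB.a))
      (by omega) (by omega)
    exact ⟨u, show _ = _ by omega, v, show _ = _ by omega, h⟩

def shape (fl : Bool) (i k : ℕ) (Z : List Al) : List Al :=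
  (if fl then [Al.c] else []) ++ (List.replicate i Al.a ++ (List.replicate k Al.b ++ Al.c :: Z))

theorem shape_succ_left (fl : Bool) (i k : ℕ) (Z : List Al) :
    shape fl (i + 1) k Z = (if fl then [Al.c] else []) ++
      Al.a :: (List.replicate i Al.a ++ (List.replicate k Al.b ++ Al.c :: Z)) := by
  simp [shape, List.replicate_succ]

theorem shape_succ_right (fl : Bool) (i k : ℕ) (Z : List Al) :
    shape fl i (k + 1) Z = ((if fl then [Al.c] else []) ++ List.replicate i Al.a) ++
      Al.b :: (List.replicate k Al.b ++ Al.c :: Z) := by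
  simp [shape, List.replicate_succ]

theorem forall_mem_front_append {τ : Set Al} {fl : Bool} (hc : fl = true → Al.c ∈ τ)
    (ha : Al.a ∈ τ) (i : ℕ) :
    ∀ y ∈ (if fl then [Al.c] else []) ++ List.replicate i Al.a, y ∈ τ := by
  intro y hy
  cases fl <;> simp only [List.mem_append, List.mem_replicate] at hy <;>
    rcases hy with hy | ⟨-, rfl⟩ <;> simp_all

namespace RNFAwtl

variable {Q : Type} (A : RNFAwtl Q Al)

open Classical in
/-- Symbolic run on `shape fl i k Z` with `i, k > 0`; the flag records whether the leading `c` is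
still present. It halts instead of deleting the inner `c`. -/
noncomputable def shapeNext : Q × Bool → Option (Option Al × (Q × Bool))
  | (q, fl) =>
    if fl ∧ Al.c ∉ A.τ q then (A.δ q Al.c).pick.map fun p => (some Al.c, p, false)
    else if Al.a ∉ A.τ q then (A.δ q Al.a).pick.map fun p => (some Al.a, p, fl)
    else if Al.b ∉ A.τ q then (A.δ q Al.b).pick.map fun p => (some Al.b, p, fl)
    else if Al.c ∉ A.τ q ∨ q ∈ A.Facc then none
    else (A.δend q).pick.map fun p => (none, p, fl)

def shapeCfg (Z : List Al) (s : Q × Bool) (i k : ℕ) : Q × List Al := (s.1, shape s.2 i k Z)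

theorem simulates_shapeNext (Z : List Al) :
    A.Simulates A.shapeNext (some Al.a) (some Al.b) (shapeCfg Z) := by
  rintro ⟨q, fl⟩ e s' h i k
  simp only [shapeNext] at h
  split_ifs at h with hc ha hb hf <;> obtain ⟨p, hp, ⟨⟩⟩ := Option.map_eq_some_iff.1 h <;>
    have hp := Set.mem_of_pick_eq_some hp <;> simp only [shapeCfg, ite_true, reduceCtorEq,
      ite_false, add_zero]
  · obtain ⟨rfl, hcτ⟩ := hc
    exact (step_append_cons_iff (u := []) (by simp) hcτ).2 ⟨p, hp, rfl⟩
  · exact Or.inr ⟨fun x _ => by cases x <;> simp_all, hp, rfl⟩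
  all_goals have hfr : fl = true → Al.c ∈ A.τ q := fun hfl => by_contra fun h' => hc ⟨hfl, h'⟩
  · rw [shape_succ_right]
    exact (step_append_cons_iff (v := List.replicate k Al.b ++ Al.c :: Z)
      (forall_mem_front_append hfr ha i) hb).2 ⟨p, hp, by simp [shape]⟩
  · rw [shape_succ_left]
    exact (step_append_cons_iff (by cases fl <;> simp_all) ha).2 ⟨p, hp, by simp [shape]⟩

theorem shapeNext_eq_none {q : Q} {fl : Bool} (h : A.shapeNext (q, fl) = none) :
    (fl = false ∧ Al.a ∈ A.τ q ∧ Al.b ∈ A.τ q ∧ Al.c ∉ A.τ q) ∨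
      ∀ Z i k, A.AcceptsFrom (q, shape fl (i + 1) (k + 1) Z) ↔
        (∀ x, x ∈ A.τ q) ∧ q ∈ A.Facc := by
  simp only [shapeNext] at h
  split_ifs at h with hc ha hb hf <;> simp only [Option.map_eq_none_iff, Set.pick_eq_none] at h
  · obtain ⟨rfl, hcτ⟩ := hc
    refine Or.inr fun Z i k => (acceptsFrom_append_cons_iff (u := []) (by simp) hcτ).trans ?_
    exact iff_of_false (by simp [h]) fun h' => hcτ (h'.1 _)
  · by_cases hcτ : Al.c ∈ A.τ q
    · have hall : ∀ x, x ∈ A.τ q := fun x => by cases x <;> assumption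
      refine Or.inr fun Z i k => ?_
      rw [acceptsFrom_iff_of_forall_mem_τ fun x _ => hall x]
      simp [hall, hf.resolve_left (not_not.2 hcτ)]
    · exact Or.inl ⟨by cases fl <;> simp_all, ha, hb, hcτ⟩
  · rw [not_or, not_not] at hf
    have hall : ∀ x, x ∈ A.τ q := fun x => by cases x <;> simp_all
    refine Or.inr fun Z i k => ?_
    rw [acceptsFrom_iff_of_forall_mem_τ fun x _ => hall x]
    simp [h, hf.2]
  all_goals
    have hfr : fl = true → Al.c ∈ A.τ q := fun hfl => by_contra fun h' => hc ⟨hfl, h'⟩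
    refine Or.inr fun Z i k => ?_
  · rw [shape_succ_right, acceptsFrom_append_cons_iff (forall_mem_front_append hfr ha _) hb]
    exact iff_of_false (by simp [h]) fun h' => hb (h'.1 _)
  · rw [shape_succ_left, acceptsFrom_append_cons_iff (by simpa using hfr) ha]
    exact iff_of_false (by simp [h]) fun h' => ha (h'.1 _)

variable {A} in
theorem shapeNext_eq_some_b {q : Q} {fl : Bool} {s : Q × Bool}
    (h : A.shapeNext (q, fl) = some (some Al.b, s)) :
    (fl = true → Al.c ∈ A.τ q) ∧ Al.a ∈ A.τ q ∧ Al.b ∉ A.τ q := by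
  simp only [shapeNext] at h
  split_ifs at h with hc ha hb <;> simp at h
  exact ⟨fun hfl => by_contra fun h' => hc ⟨hfl, h'⟩, ha, hb⟩

theorem acceptsFrom_shape_swap {q : Q} {fl : Bool} (hfr : fl = true → Al.c ∈ A.τ q)
    (ha : Al.a ∈ A.τ q) (hbc : Al.b ∈ A.τ q ↔ Al.c ∉ A.τ q) (i : ℕ) :
    A.AcceptsFrom (q, shape fl i 1 []) ↔ A.AcceptsFrom (q, shape fl i 0 [Al.b]) := by
  have hu := forall_mem_front_append hfr ha i
  have h₁ : shape fl i 1 [] = ((if fl then [Al.c] else []) ++ List.replicate i Al.a) ++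
      [Al.b, Al.c] := by simp [shape]
  have h₂ : shape fl i 0 [Al.b] = ((if fl then [Al.c] else []) ++ List.replicate i Al.a) ++
      [Al.c, Al.b] := by simp [shape]
  rw [h₁, h₂]
  generalize (if fl then [Al.c] else []) ++ List.replicate i Al.a = u at hu
  have hu' {y : Al} (hy : y ∈ A.τ q) : ∀ z ∈ u ++ [y], z ∈ A.τ q := by
    simpa [or_imp, forall_and] using ⟨hu, hy⟩
  by_cases hb : Al.b ∈ A.τ q
  · simpa using acceptsFrom_congr_of_append_eq (u₁ := u ++ [Al.b]) (v₁ := []) (v₂ := [Al.b])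
      (hu' hb) hu (hbc.1 hb) (by simp)
  · have hc : Al.c ∈ A.τ q := by_contra fun h => hb (hbc.2 h)
    simpa using acceptsFrom_congr_of_append_eq (v₁ := [Al.c]) (u₂ := u ++ [Al.c]) (v₂ := [])
      hu (hu' hc) hb (by simp)

theorem acceptsFrom_shape_move {q : Q} (ha : Al.a ∈ A.τ q) (hc : Al.c ∉ A.τ q) (i : ℕ)
    (Z : List Al) :
    A.AcceptsFrom (q, shape false (i + 1) 0 Z) ↔
      A.AcceptsFrom (q, shape false i 0 (Al.a :: Z)) :=
  acceptsFrom_congr_of_append_eq (fun y hy => List.eq_of_mem_replicate hy ▸ ha)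
    (fun y hy => List.eq_of_mem_replicate hy ▸ ha) hc (by simp [List.replicate_succ'])

end RNFAwtl

namespace RNFAwtl

open SymbolicRun

variable {Q : Type} {A : RNFAwtl Q Al} {q₀ : Q} {fr : Bool}

theorem acceptsFrom_shape_iff_run (hdet : A.Deterministic) (Z : List Al) {t i k : ℕ}
    (hdef : ∀ t' < t, (A.shapeNext (state A.shapeNext (q₀, fr) t')).isSome)
    (hi : count A.shapeNext (q₀, fr) (some Al.a) t ≤ i)
    (hk : count A.shapeNext (q₀, fr) (some Al.b) t ≤ k) :
    A.AcceptsFrom (q₀, shape fr i k Z) ↔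
      A.AcceptsFrom (shapeCfg Z (state A.shapeNext (q₀, fr) t)
        (i - count A.shapeNext (q₀, fr) (some Al.a) t)
        (k - count A.shapeNext (q₀, fr) (some Al.b) t)) :=
  hdet.acceptsFrom_iff_of_reflTransGen ((simulates_shapeNext A Z).reflTransGen_of_start hdef hi hk)

theorem mem_τ_b_iff_mem_τ_c_of_state (hdet : A.Deterministic)
    (hP : ∀ i k, k ≤ i → A.AcceptsFrom (q₀, shape fr i k []))
    (hswap : ∀ i k, k ≤ i → ¬ A.AcceptsFrom (q₀, shape fr i k [Al.b])) {t : ℕ}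
    (hdef : ∀ t' < t, (A.shapeNext (state A.shapeNext (q₀, fr) t')).isSome) {q : Q} {fl : Bool}
    (hs : state A.shapeNext (q₀, fr) t = (q, fl)) (hfr : fl = true → Al.c ∈ A.τ q)
    (ha : Al.a ∈ A.τ q) : Al.b ∈ A.τ q ↔ Al.c ∈ A.τ q := by
  by_contra hbc
  have hA := count_le (next := A.shapeNext) (s₀ := (q₀, fr)) (some Al.a) t
  have hB := count_le (next := A.shapeNext) (s₀ := (q₀, fr)) (some Al.b) t
  have h₁ := acceptsFrom_shape_iff_run hdet [] hdef (i := t + 1)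
    (k := count A.shapeNext (q₀, fr) (some Al.b) t + 1) (by omega) (by omega)
  have h₂ := acceptsFrom_shape_iff_run hdet [Al.b] hdef (i := t + 1) (by omega) le_rfl
  rw [hs, shapeCfg, Nat.add_sub_cancel_left] at h₁
  rw [hs, shapeCfg, Nat.sub_self] at h₂
  exact hswap _ _ (by omega) (h₂.2 ((acceptsFrom_shape_swap A hfr ha (by tauto) _).1
    (h₁.1 (hP _ _ (by omega)))))

theorem mem_τ_c_of_state (hdet : A.Deterministic) (Z : List Al)
    (hmove : ∀ i k, k ≤ i →
      (A.AcceptsFrom (q₀, shape fr (i + 1) k Z) ↔ ¬ A.AcceptsFrom (q₀, shape fr i k (Al.a :: Z))))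
    {t : ℕ} (hdef : ∀ t' < t, (A.shapeNext (state A.shapeNext (q₀, fr) t')).isSome) {q : Q}
    (hs : state A.shapeNext (q₀, fr) t = (q, false)) (ha : Al.a ∈ A.τ q) : Al.c ∈ A.τ q := by
  by_contra hc
  have hA := count_le (next := A.shapeNext) (s₀ := (q₀, fr)) (some Al.a) t
  have hB := count_le (next := A.shapeNext) (s₀ := (q₀, fr)) (some Al.b) t
  have h₁ := acceptsFrom_shape_iff_run hdet Z hdef (i := t + 1) (by omega) le_rfl
  have h₂ := acceptsFrom_shape_iff_run hdet (Al.a :: Z) hdef (i := t) hA le_rfl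
  rw [hs, shapeCfg, Nat.sub_self, show t + 1 - count A.shapeNext (q₀, fr) (some Al.a) t =
    t - count A.shapeNext (q₀, fr) (some Al.a) t + 1 by omega] at h₁
  rw [hs, shapeCfg, Nat.sub_self] at h₂
  have := hmove t _ hB
  rw [h₁, h₂, acceptsFrom_shape_move A ha hc] at this
  exact iff_not_self this

theorem isSome_shapeNext (hdet : A.Deterministic)
    (hP : ∀ i k, k ≤ i → A.AcceptsFrom (q₀, shape fr i k []))
    (hN : ∀ i k, i < k → ¬ A.AcceptsFrom (q₀, shape fr i k []))
    (hswap : ∀ i k, k ≤ i → ¬ A.AcceptsFrom (q₀, shape fr i k [Al.b])) (t : ℕ) :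
    (A.shapeNext (state A.shapeNext (q₀, fr) t)).isSome := by
  refine (simulates_shapeNext A []).isSome_next (s₀ := (q₀, fr)) hdet (fun N => ⟨N, N, N, N + 1,
    le_rfl, le_rfl, le_rfl, by omega, hP N N le_rfl, hN N (N + 1) (by omega)⟩)
    (fun t hdef hnone => ?_) t
  rcases hs : state A.shapeNext (q₀, fr) t with ⟨q, fl⟩
  rw [hs] at hnone
  rcases shapeNext_eq_none A hnone with ⟨rfl, ha, hb, hc⟩ | hconst
  · exact (hc ((mem_τ_b_iff_mem_τ_c_of_state hdet hP hswap hdef hs (by simp) ha).1 hb)).elim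
  · exact ⟨_, hconst []⟩

theorem count_shapeNext_b_eq_zero (hdet : A.Deterministic)
    (hP : ∀ i k, k ≤ i → A.AcceptsFrom (q₀, shape fr i k []))
    (hswap : ∀ i k, k ≤ i → ¬ A.AcceptsFrom (q₀, shape fr i k [Al.b])) (Z : List Al)
    (hmove : ∀ i k, k ≤ i →
      (A.AcceptsFrom (q₀, shape fr (i + 1) k Z) ↔ ¬ A.AcceptsFrom (q₀, shape fr i k (Al.a :: Z))))
    (hdef : ∀ t, (A.shapeNext (state A.shapeNext (q₀, fr) t)).isSome) (t : ℕ) :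
    count A.shapeNext (q₀, fr) (some Al.b) t = 0 := by
  refine Nat.count_iff_forall_not.2 fun n _ hn => ?_
  obtain ⟨⟨e, s⟩, hes, he⟩ := Option.map_eq_some_iff.1 hn
  obtain rfl : e = some Al.b := he
  rcases hs : state A.shapeNext (q₀, fr) n with ⟨q, fl⟩
  rw [hs] at hes
  obtain ⟨hfr, ha, hb⟩ := shapeNext_eq_some_b hes
  have hc : Al.c ∉ A.τ q :=
    fun hc => hb ((mem_τ_b_iff_mem_τ_c_of_state hdet hP hswap (fun t _ => hdef t) hs hfr ha).2 hc)
  obtain rfl : fl = false := by cases fl <;> simp_all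
  exact hc (mem_τ_c_of_state hdet Z hmove (fun t _ => hdef t) hs ha)

end RNFAwtl

open RNFAwtl SymbolicRun in
theorem notMem_RDFAwtlLangs_of_shape {L : Set (List Al)} (fr : Bool)
    (hP : ∀ i k, k ≤ i → shape fr i k [] ∈ L) (hN : ∀ i k, i < k → shape fr i k [] ∉ L)
    (hswap : ∀ i k, k ≤ i → shape fr i k [Al.b] ∉ L) (Z : List Al)
    (hmove : ∀ i k, k ≤ i → (shape fr (i + 1) k Z ∈ L ↔ shape fr i k (Al.a :: Z) ∉ L)) :
    L ∉ RDFAwtlLangs Al := by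
  rintro ⟨Q, _, A, hdet, rfl⟩
  obtain ⟨q₀, hI⟩ := hdet.1
  have hmem (w : List Al) : w ∈ A.lang ↔ A.AcceptsFrom (q₀, w) := accepts_iff hI
  simp only [hmem] at hP hN hswap hmove
  have hdef := isSome_shapeNext hdet hP hN hswap
  have hb := count_shapeNext_b_eq_zero hdet hP hswap Z hmove hdef
  have hsim := simulates_shapeNext A []
  obtain ⟨u, v, huv, hs⟩ := exists_lt_state_eq (next := A.shapeNext) (s₀ := (q₀, fr))
  have ha : count A.shapeNext (q₀, fr) (some Al.a) u =
      count A.shapeNext (q₀, fr) (some Al.a) v := by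
    have hpump := hsim.acceptsFrom_pump hdet hdef huv.le hs (i := v) (k := v + 1) le_rfl
      (by omega)
    have := count_mono (next := A.shapeNext) (s₀ := (q₀, fr)) (some Al.a) huv.le
    rw [hb, hb] at hpump
    by_contra hne
    exact hN v (v + 1) (by omega) (hpump.1 (hP _ _ (by omega)))
  exact hsim.not_acceptsFrom_of_cycle hdet hdef huv hs ha (by rw [hb, hb]) le_rfl le_rfl
    (hP v v le_rfl)

theorem Language.mem_mul_kstar_iff {α : Type*} {l : Language α} {w : List α} (hw : w ≠ []) :
    w ∈ l * KStar.kstar l ↔ w ∈ KStar.kstar l := by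
  rw [← Language.one_add_self_mul_kstar_eq_kstar l, Language.mem_add, Language.mem_one,
    Language.one_add_self_mul_kstar_eq_kstar]
  exact ⟨Or.inr, fun h => h.resolve_left hw⟩

theorem image_reverse_LcR :
    List.reverse '' (LcR : Set (List Al)) = { w | ∃ u ∈ Lge, w = u ++ [Al.c] } := by
  ext w
  constructor
  · rintro ⟨_, ⟨u, hc, hcount, rfl⟩, rfl⟩
    exact ⟨u.reverse, ⟨by simpa using hc, by simpa using hcount⟩, by simp⟩
  · rintro ⟨u, ⟨hc, hcount⟩, rfl⟩
    exact ⟨Al.c :: u.reverse, ⟨u.reverse, by simpa using hc, by simpa using hcount, rfl⟩,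
      by simp⟩

theorem shape_eq_append_c_append (fl : Bool) (i k : ℕ) (Z : List Al) :
    shape fl i k Z = (if fl then [Al.c] else []) ++
      ((List.replicate i Al.a ++ List.replicate k Al.b) ++ Al.c :: Z) := by
  simp [shape]

theorem c_notMem_replicate_append (i k : ℕ) :
    Al.c ∉ List.replicate i Al.a ++ List.replicate k Al.b := by
  simp [List.mem_replicate]

theorem shape_false_mem_iff {i k : ℕ} {Z : List Al} (hZ : Al.c ∉ Z) :
    shape false i k Z ∈ { w | ∃ u ∈ Lge, w = u ++ [Al.c] } ↔ Z = [] ∧ k ≤ i := by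
  simp only [Set.mem_ofPred_eq, shape_eq_append_c_append, Lge]
  constructor
  · rintro ⟨u, ⟨hc, hcount⟩, h⟩
    obtain ⟨rfl, -, rfl⟩ :=
      (List.append_cons_inj_of_notMem (c_notMem_replicate_append i k) hZ).1 h
    simpa [List.count_replicate] using hcount
  · rintro ⟨rfl, hki⟩
    exact ⟨_, ⟨c_notMem_replicate_append i k, by simpa [List.count_replicate]⟩, rfl⟩

theorem count_c_flatten_of_subset_LcR {l : List (List Al)} (h : ∀ x ∈ l, x ∈ LcR) :
    l.flatten.count Al.c = l.length := by
  have hc : ∀ x ∈ l, x.count Al.c = 1 := by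
    intro x hx
    obtain ⟨u, hu, -, rfl⟩ := h x hx
    simp [List.count_eq_zero_of_not_mem hu]
  rw [List.count_flatten, List.map_congr_left hc]
  simp

theorem shape_true_mem_kstar_iff {i k : ℕ} {Z : List Al} (hZ : Al.c ∉ Z) :
    shape true i k Z ∈ KStar.kstar LcR ↔ k ≤ i ∧ Z.count Al.b ≤ Z.count Al.a := by
  have hab := c_notMem_replicate_append i k
  rw [Language.mem_kstar]
  constructor
  · rintro ⟨l, hl, hmem⟩
    have hlen : l.length = 2 := by
      rw [← count_c_flatten_of_subset_LcR hmem, ← hl, shape]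
      simp [List.count_replicate, List.count_eq_zero_of_not_mem hZ]
    obtain ⟨x, y, rfl⟩ := List.length_eq_two.1 hlen
    obtain ⟨u, hu, hucount, rfl⟩ := hmem x (by simp)
    obtain ⟨v, hv, hvcount, rfl⟩ := hmem y (by simp)
    simp only [shape_eq_append_c_append, List.flatten_cons, List.flatten_nil, List.append_nil,
      if_true, List.cons_append, List.cons.injEq, true_and] at hl
    obtain ⟨rfl, -, rfl⟩ := (List.append_cons_inj_of_notMem hab hZ).1 hl
    exact ⟨by simpa [List.count_replicate] using hucount, hvcount⟩
  · rintro ⟨hki, hZcount⟩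
    refine ⟨[Al.c :: (List.replicate i Al.a ++ List.replicate k Al.b), Al.c :: Z], by simp [shape],
      ?_⟩
    simp only [List.mem_cons, List.not_mem_nil, or_false, forall_eq_or_imp, forall_eq]
    exact ⟨⟨_, hab, by simpa [List.count_replicate], rfl⟩, ⟨Z, hZ, hZcount, rfl⟩⟩

theorem Lc_notMem_RDFAwtlLangs :
    { w : List Al | ∃ u ∈ Lge, w = u ++ [Al.c] } ∉ RDFAwtlLangs Al := by
  refine notMem_RDFAwtlLangs_of_shape false (fun i k h => ?_) (fun i k h => ?_)
    (fun i k h => ?_) [] (fun i k h => ?_) <;>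
    simp (disch := simp) only [shape_false_mem_iff] <;> simp <;> omega

theorem shape_true_ne_nil (i k : ℕ) (Z : List Al) : shape true i k Z ≠ [] := by
  simp [shape]

theorem notMem_RDFAwtlLangs_of_shape_true_mem_iff {L : Set (List Al)}
    (hL : ∀ i k Z, Al.c ∉ Z → (shape true i k Z ∈ L ↔ k ≤ i ∧ Z.count Al.b ≤ Z.count Al.a)) :
    L ∉ RDFAwtlLangs Al := by
  refine notMem_RDFAwtlLangs_of_shape true (fun i k h => ?_) (fun i k h => ?_)
    (fun i k h => ?_) [Al.b] (fun i k h => ?_) <;>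
    simp (disch := simp) only [hL] <;> simp <;> omega

theorem kstar_LcR_notMem_RDFAwtlLangs : (KStar.kstar LcR : Language Al) ∉ RDFAwtlLangs Al :=
  notMem_RDFAwtlLangs_of_shape_true_mem_iff fun _ _ _ hZ => shape_true_mem_kstar_iff hZ

theorem mul_kstar_LcR_notMem_RDFAwtlLangs :
    (LcR * KStar.kstar LcR : Language Al) ∉ RDFAwtlLangs Al :=
  notMem_RDFAwtlLangs_of_shape_true_mem_iff fun i k Z hZ =>
    (Language.mem_mul_kstar_iff (shape_true_ne_nil i k Z)).trans (shape_true_mem_kstar_iff hZ)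

/-- ℒ(RDFAwtl) is not closed under reversal, (disjoint) product,
Kleene plus, Kleene star, or shuffle. -/
theorem RDFAwtl_nonclosure_rev_prod_plus_star_shuffle :
    (LcR : Set (List Al)) ∈ DFAwtlLangs Al ∧ Lge ∈ DFAwtlLangs Al ∧
    ({[Al.c]} : Set (List Al)) ∈ DFAwtlLangs Al ∧
    List.reverse '' (LcR : Set (List Al)) ∉ RDFAwtlLangs Al ∧
    { w : List Al | ∃ u ∈ Lge, w = u ++ [Al.c] } ∉ RDFAwtlLangs Al ∧
    (LcR * KStar.kstar LcR : Language Al) ∉ RDFAwtlLangs Al ∧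
    (KStar.kstar LcR : Language Al) ∉ RDFAwtlLangs Al ∧
    Leq ∈ DFAwtlLangs AB ∧ L2eq ∈ DFAwtlLangs AB ∧
    shuffleLang Leq L2eq ∉ RDFAwtlLangs AB := by
  refine ⟨LcR_mem_DFAwtlLangs, Lge_mem_DFAwtlLangs, singleton_c_mem_DFAwtlLangs,
    image_reverse_LcR ▸ Lc_notMem_RDFAwtlLangs, Lc_notMem_RDFAwtlLangs,
    mul_kstar_LcR_notMem_RDFAwtlLangs, kstar_LcR_notMem_RDFAwtlLangs, Leq_mem_DFAwtlLangs,
    L2eq_mem_DFAwtlLangs, notMem_RDFAwtlLangs_of_replicate fun i k => ?_⟩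
  simp [shuffleLang_Leq_L2eq, List.count_replicate]
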